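/- Let p and q be distinct odd primes with p·q ≡ 3 (mod 4). Then there is no polynomial F ∈ ℤ[X] with N_{pq}(F) = p. -/

import Mathlib

open Polynomial

section AuxiliaryLemmas

/-- aeval of an integral element at an integer polynomial is integral. -/
lemma aeval_isIntegral' {K : Type*} [CommRing K] {x : K} (hx : IsIntegral ℤ x)
    (F : Polynomial ℤ) : IsIntegral ℤ (Polynomial.aeval x F) := by
  have h1 : Polynomial.aeval x F ∈ Algebra.adjoin ℤ ({x} : Set K) :=
    Polynomial.aeval_mem_adjoin_singleton ℤ x
  have h2 : Algebra.adjoin ℤ ({x} : Set K) ≤ integralClosure ℤ K := by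
    rw [Algebra.adjoin_le_iff, Set.singleton_subset_iff]; exact hx
  exact h2 h1

/-- A Galois-fixed algebraic integer in a Galois extension of ℚ is a rational integer. -/
lemma fixed_is_int' {K : Type*} [Field K] [Algebra ℚ K] [FiniteDimensional ℚ K] [IsGalois ℚ K]
    (x : K) (hfix : ∀ σ : K ≃ₐ[ℚ] K, σ x = x) (hint : IsIntegral ℤ x) :
    ∃ m : ℤ, (m : K) = x := by
  have hbot : x ∈ (⊥ : IntermediateField ℚ K) := by
    have h1 : IntermediateField.fixingSubgroup (⊥ : IntermediateField ℚ K) = ⊤ := by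
      rw [eq_top_iff]
      intro σ _
      rw [IntermediateField.mem_fixingSubgroup_iff]
      rintro y hy
      obtain ⟨r, rfl⟩ := IntermediateField.mem_bot.mp hy
      exact σ.commutes r
    have h2 := IsGalois.fixedField_fixingSubgroup (⊥ : IntermediateField ℚ K)
    rw [h1] at h2
    rw [← h2]
    exact fun g => hfix g
  obtain ⟨r, hr⟩ := IntermediateField.mem_bot.mp hbot
  have hri : IsIntegral ℤ r := by
    rw [← isIntegral_algebraMap_iff (algebraMap ℚ K).injective]
    rwa [hr]
  obtain ⟨m, hm⟩ := IsIntegrallyClosed.isIntegral_iff.mp hri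
  exact ⟨m, by rw [← hr, ← hm]; simp⟩

/-- No integer square equals an (integer cast of a) prime. -/
lemma int_sq_ne_prime' {p : ℕ} (hp : p.Prime) (r : ℤ) : r ^ 2 ≠ (p : ℤ) := by
  intro h
  have h2 : r.natAbs * r.natAbs = p := by
    have := congrArg Int.natAbs h
    simpa [Int.natAbs_mul, sq, Int.natAbs_mul] using this
  have hd : r.natAbs ∣ p := Dvd.intro_left _ h2
  rcases hp.eq_one_or_self_of_dvd _ hd with h1 | h1
  · rw [h1, one_mul] at h2; exact hp.one_lt.ne' h2.symm
  · rw [h1] at h2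
    have h3 : p * p = p * 1 := by rw [h2, mul_one]
    have h4 : p = 1 := Nat.eq_of_mul_eq_mul_left hp.pos h3
    exact hp.one_lt.ne' h4

/-- The final integer arithmetic contradiction. -/
lemma endgame' {p q : ℕ} (hp : Nat.Prime p) (hq : Nat.Prime q) (hqodd : Odd q)
    (hpq : p ≠ q) (tz kz : ℤ)
    (hE : ((p : ℤ) * q) * (4 * p - tz ^ 2) = kz ^ 2) : False := by
  have hpZ : Prime (p : ℤ) := Nat.prime_iff_prime_int.mp hp
  have hqZ : Prime (q : ℤ) := Nat.prime_iff_prime_int.mp hq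
  have hq2 : q ≠ 2 := fun h => absurd (h ▸ hqodd) (by decide)
  have hpk : (p : ℤ) ∣ kz := by
    have : (p : ℤ) ∣ kz ^ 2 := ⟨q * (4 * p - tz ^ 2), by rw [← hE]; ring⟩
    exact hpZ.dvd_of_dvd_pow this
  have hqk : (q : ℤ) ∣ kz := by
    have : (q : ℤ) ∣ kz ^ 2 := ⟨p * (4 * p - tz ^ 2), by rw [← hE]; ring⟩
    exact hqZ.dvd_of_dvd_pow this
  have hcop : IsCoprime (p : ℤ) (q : ℤ) :=
    Nat.isCoprime_iff_coprime.mpr ((Nat.coprime_primes hp hq).mpr hpq)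
  obtain ⟨s, hs⟩ := hcop.mul_dvd hpk hqk
  have hcancel : 4 * (p : ℤ) - tz ^ 2 = (p * q) * s ^ 2 := by
    have hne : ((p : ℤ) * q) ≠ 0 := by
      have : (0:ℤ) < (p : ℤ) * q := by exact_mod_cast Nat.mul_pos hp.pos hq.pos
      exact this.ne'
    apply mul_left_cancel₀ hne
    rw [hE, hs]; ring
  have hq3 : 3 ≤ (q : ℤ) := by
    have h2 := hq.two_le
    have : 2 < q := lt_of_le_of_ne h2 (Ne.symm hq2)
    exact_mod_cast this
  have hp3 : 0 < (p : ℤ) := by exact_mod_cast hp.pos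
  rcases eq_or_ne s 0 with hs0 | hs0
  · rw [hs0] at hcancel
    have hz : ((p : ℤ) * q) * (0:ℤ) ^ 2 = 0 := by ring
    rw [hz] at hcancel
    have ht4 : tz ^ 2 = 4 * (p : ℤ) := by linarith [hcancel]
    have hev : Even tz := by
      have : Even (tz ^ 2) := by rw [ht4]; exact ⟨2 * p, by ring⟩
      rcases Int.even_or_odd tz with h | h
      · exact h
      · exfalso; exact (Int.not_odd_iff_even.mpr this) (h.pow)
    obtain ⟨r, hr⟩ := hev
    rw [hr] at ht4
    have h6 : 4 * r ^ 2 = 4 * (p : ℤ) := by linear_combination ht4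
    have h5 : r ^ 2 = (p : ℤ) := by linarith
    exact int_sq_ne_prime' hp r h5
  · have hs1 : 1 ≤ s ^ 2 := by
      have h0 : 0 < s ^ 2 := by positivity
      linarith [Int.lt_iff_add_one_le.mp h0]
    have hsq1 : s ^ 2 = 1 := by
      by_contra hne
      have h2 : 2 ≤ s ^ 2 := Int.add_one_le_iff.mpr (lt_of_le_of_ne hs1 (Ne.symm hne))
      have h2p : (p : ℤ) * q * 2 ≤ (p : ℤ) * q * s ^ 2 := by
        have hpq0 : (0:ℤ) ≤ (p : ℤ) * q := by positivity
        exact mul_le_mul_of_nonneg_left h2 hpq0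
      have hq3p : (p:ℤ) * 3 ≤ (p : ℤ) * q := mul_le_mul_of_nonneg_left hq3 hp3.le
      nlinarith [sq_nonneg tz, hcancel, hp3]
    rw [hsq1, mul_one] at hcancel
    have hq35 : q = 3 ∨ 5 ≤ q := by
      rcases hqodd with ⟨k, hk⟩
      have := hq.two_le
      omega
    rcases hq35 with hq3' | hq5
    · have hq3Z : (q : ℤ) = 3 := by exact_mod_cast hq3'
      have h5 : tz ^ 2 = (p : ℤ) := by rw [hq3Z] at hcancel; linarith
      exact int_sq_ne_prime' hp tz h5
    · have h5 : (5:ℤ) ≤ (q : ℤ) := by exact_mod_cast hq5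
      have h6 : (p:ℤ) * 5 ≤ (p : ℤ) * q := mul_le_mul_of_nonneg_left h5 hp3.le
      linarith [sq_nonneg tz, hcancel, hp3, h6]

/-- The Gauss sum piece at a prime divisor `r` of `n`. -/
lemma gauss_piece' {K : Type*} [Field K] [CharZero K] {n r m : ℕ} [NeZero n]
    (hr : Fact r.Prime) (hodd : r ≠ 2) (hnrm : n = m * r) {ζ : K}
    (hζ : IsPrimitiveRoot ζ n) :
    ∃ g : K, IsIntegral ℤ g ∧
      g ^ 2 = ((quadraticChar (ZMod r) (-1) : ℤ) : K) * r ∧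
      ∀ (u : (ZMod n)ˣ) (σ : K →+* K), σ ζ = ζ ^ ((u : ZMod n)).val →
        σ g = ((quadraticChar (ZMod r)
          (ZMod.castHom ⟨m, by rw [hnrm, mul_comm]⟩ (ZMod r) (u : ZMod n)) : ℤ) : K) * g := by
  classical
  haveI : NeZero r := ⟨hr.out.pos.ne'⟩
  have hζr : IsPrimitiveRoot (ζ ^ m) r := hζ.pow (Nat.pos_of_ne_zero (NeZero.ne n)) hnrm
  let ψ : AddChar (ZMod r) K := AddChar.zmodChar r hζr.pow_eq_one
  have hψprim : ψ.IsPrimitive := AddChar.zmodChar_primitive_of_primitive_root r hζr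
  let χ : MulChar (ZMod r) K := (quadraticChar (ZMod r)).ringHomComp (Int.castRingHom K)
  have hχne : χ ≠ 1 := by
    rw [MulChar.ringHomComp_ne_one_iff Int.cast_injective]
    exact quadraticChar_ne_one (by rwa [ZMod.ringChar_zmod_n])
  have hχquad : χ.IsQuadratic := (quadraticChar_isQuadratic (ZMod r)).comp _
  refine ⟨gaussSum χ ψ, ?_, ?_, ?_⟩
  · have hζint : IsIntegral ℤ (ζ ^ m) := ((hζ.isIntegral (Nat.pos_of_ne_zero (NeZero.ne n))).pow m)
    rw [gaussSum]
    apply IsIntegral.sum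
    intro a _
    apply IsIntegral.mul
    · show IsIntegral ℤ (((quadraticChar (ZMod r) a : ℤ) : K))
      have : (((quadraticChar (ZMod r) a : ℤ) : K)) = algebraMap ℤ K (quadraticChar (ZMod r) a) := by
        simp [algebraMap_int_eq]
      rw [this]; exact isIntegral_algebraMap
    · show IsIntegral ℤ (ψ a)
      have : ψ a = (ζ ^ m) ^ a.val := rfl
      rw [this]; exact hζint.pow _
  · have hsq := gaussSum_sq hχne hχquad hψprim
    rw [hsq]
    have hcard : (Fintype.card (ZMod r) : K) = (r : K) := by rw [ZMod.card]
    rw [hcard]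
    congr 1
  · intro u σ hσζ
    set t := ((u : ZMod n)).val with ht
    set up : (ZMod r)ˣ :=
      Units.map (ZMod.castHom ⟨m, by rw [hnrm, mul_comm]⟩ (ZMod r)).toMonoidHom u with hupdef
    have hup : (up : ZMod r) = ((t : ℕ) : ZMod r) := by
      show ZMod.castHom _ (ZMod r) (u : ZMod n) = _
      rw [ZMod.castHom_apply, ← ZMod.natCast_val]
    have hσζm : σ (ζ ^ m) = (ζ ^ m) ^ t := by
      rw [map_pow, hσζ, ← pow_mul, ← pow_mul, mul_comm]
    have hσψ : ∀ a : ZMod r, σ (ψ a) = ψ ((up : ZMod r) * a) := by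
      intro a
      have h1 : σ (ψ a) = (ζ ^ m) ^ (t * a.val) := by
        show σ ((ζ ^ m) ^ a.val) = _
        rw [map_pow, hσζm, ← pow_mul, mul_comm]
      have h2 : ψ (((t * a.val : ℕ) : ZMod r)) = (ζ ^ m) ^ (t * a.val) :=
        AddChar.zmodChar_apply' hζr.pow_eq_one _
      rw [h1, ← h2, hup]
      congr 1
      push_cast [ZMod.natCast_val, ZMod.cast_id]
      ring
    have hσg : σ (gaussSum χ ψ) = gaussSum χ (AddChar.mulShift ψ (up : ZMod r)) := by
      rw [gaussSum, gaussSum, map_sum]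
      refine Finset.sum_congr rfl fun a _ => ?_
      rw [map_mul, hσψ a, AddChar.mulShift_apply]
      congr 1
      show σ (((quadraticChar (ZMod r) a : ℤ) : K)) = _
      rw [map_intCast]
      rfl
    set cu : ℤ := quadraticChar (ZMod r) ((up : ZMod r)) with hcu
    have hupne : ((up : ZMod r)) ≠ 0 := up.isUnit.ne_zero
    have hcu2 : cu * cu = 1 := by
      have := quadraticChar_sq_one hupne
      rwa [sq] at this
    have hχup : χ ((up : ZMod r)) = (cu : K) := rfl
    have key : (cu : K) * σ (gaussSum χ ψ) = gaussSum χ ψ := by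
      rw [hσg, ← hχup]
      exact gaussSum_mulShift χ ψ up
    have hres : σ (gaussSum χ ψ) = (cu : K) * gaussSum χ ψ := by
      have h1 : ((cu : K) * (cu : K)) = 1 := by exact_mod_cast congrArg (Int.cast : ℤ → K) hcu2
      calc σ (gaussSum χ ψ) = ((cu : K) * (cu : K)) * σ (gaussSum χ ψ) := by rw [h1, one_mul]
        _ = (cu : K) * ((cu : K) * σ (gaussSum χ ψ)) := by ring
        _ = (cu : K) * gaussSum χ ψ := by rw [key]
    rw [hres]
    congr 1

end AuxiliaryLemmas

/-- `Nnorm d F` is the product of `F` over the primitive `d`-th roots of unity in `ℂ`. -/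
noncomputable def Nnorm (d : ℕ) (F : Polynomial ℤ) : ℂ :=
  ∏ j ∈ (Finset.range d).filter (fun j => Nat.gcd j d = 1),
    Polynomial.aeval (Complex.exp (2 * ↑Real.pi * Complex.I * (j : ℂ) / (d : ℂ))) F

theorem stmt4 (p q : ℕ) (hp : Nat.Prime p) (hq : Nat.Prime q)
    (hpodd : Odd p) (hqodd : Odd q) (hpq : p ≠ q) (hmod : (p * q) % 4 = 3) :
    ¬ ∃ F : Polynomial ℤ, Nnorm (p * q) F = (p : ℂ) := by
  classical
  rintro ⟨F, hF⟩
  haveI : Fact p.Prime := ⟨hp⟩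
  haveI : Fact q.Prime := ⟨hq⟩
  have hp2 : p ≠ 2 := fun h => absurd (h ▸ hpodd) (by decide)
  have hq2 : q ≠ 2 := fun h => absurd (h ▸ hqodd) (by decide)
  set n : ℕ := p * q with hn
  have hnpos : 0 < n := Nat.mul_pos hp.pos hq.pos
  set N : ℕ+ := ⟨n, hnpos⟩ with hN
  let K := CyclotomicField N ℚ
  haveI : NeZero ((N : ℕ) : ℚ) := ⟨by exact_mod_cast hnpos.ne'⟩
  haveI : NeZero (N : ℕ) := ⟨hnpos.ne'⟩
  haveI : CharZero K := charZero_of_injective_algebraMap (algebraMap ℚ K).injective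
  haveI : IsCyclotomicExtension {(N : ℕ)} ℚ K := CyclotomicField.isCyclotomicExtension _ _
  let ζ : K := IsCyclotomicExtension.zeta N ℚ K
  have hζ : IsPrimitiveRoot ζ N := IsCyclotomicExtension.zeta_spec N ℚ K
  haveI : IsGalois ℚ K := IsCyclotomicExtension.isGalois {(N : ℕ)} ℚ K
  haveI : NeZero n := ⟨hnpos.ne'⟩
  have hζn : IsPrimitiveRoot ζ n := hζ
  have hact : ∀ σ : K ≃ₐ[ℚ] K, ζ ^ ((hζn.autToPow ℚ σ : ZMod n)).val = σ ζ :=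
    fun σ => hζn.autToPow_spec ℚ σ
  -- the quadratic character mod n
  let castp : ZMod n →+* ZMod p := ZMod.castHom ⟨q, hn⟩ (ZMod p)
  let castq : ZMod n →+* ZMod q := ZMod.castHom ⟨p, by rw [hn, mul_comm]⟩ (ZMod q)
  let c : (ZMod n)ˣ → ℤ := fun u =>
    quadraticChar (ZMod p) (castp u) * quadraticChar (ZMod q) (castq u)
  have hcmul : ∀ u v : (ZMod n)ˣ, c (u * v) = c u * c v := by
    intro u v
    simp only [c, Units.val_mul, map_mul]
    ring
  have hcastp_ne : ∀ u : (ZMod n)ˣ, castp (u : ZMod n) ≠ 0 := fun u =>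
    ((Units.isUnit u).map castp).ne_zero
  have hcastq_ne : ∀ u : (ZMod n)ˣ, castq (u : ZMod n) ≠ 0 := fun u =>
    ((Units.isUnit u).map castq).ne_zero
  have hcsq : ∀ u : (ZMod n)ˣ, c u * c u = 1 := by
    intro u
    have h1 : quadraticChar (ZMod p) (castp u) ^ 2 = 1 := quadraticChar_sq_one (hcastp_ne u)
    have h2 : quadraticChar (ZMod q) (castq u) ^ 2 = 1 := quadraticChar_sq_one (hcastq_ne u)
    have : c u * c u =
        (quadraticChar (ZMod p) (castp u) ^ 2) * (quadraticChar (ZMod q) (castq u) ^ 2) := by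
      simp only [c]; ring
    rw [this, h1, h2, mul_one]
  have hcone : c 1 = 1 := by simp [c]
  have hcinv : ∀ u : (ZMod n)ˣ, c u⁻¹ = c u := by
    intro u
    have h1 : c u⁻¹ * c u = 1 := by rw [← hcmul, inv_mul_cancel, hcone]
    have h2 := hcsq u
    calc c u⁻¹ = c u⁻¹ * (c u * c u) := by rw [h2, mul_one]
      _ = (c u⁻¹ * c u) * c u := by ring
      _ = c u := by rw [h1, one_mul]
  have hcdi : ∀ u : (ZMod n)ˣ, c u = 1 ∨ c u = -1 := fun u =>
    mul_self_eq_one_iff.mp (hcsq u)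
  -- the `e` map and the partial products `B`
  let e : (ZMod n)ˣ → K := fun v => ζ ^ ((v : ZMod n)).val
  have he_mul : ∀ (u v : (ZMod n)ˣ), (e v) ^ ((u : ZMod n)).val = e (u * v) := by
    intro u v
    simp only [e, Units.val_mul, ← pow_mul]
    rw [ZMod.val_mul, ← pow_eq_pow_mod _ hζn.pow_eq_one, mul_comm]
  let B : ℤ → K := fun s =>
    ∏ v ∈ Finset.univ.filter (fun v => c v = s), Polynomial.aeval (e v) F
  have hBequiv : ∀ (σ : K ≃ₐ[ℚ] K) (s : ℤ), σ (B s) = B (c (hζn.autToPow ℚ σ) * s) := by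
    intro σ s
    set u : (ZMod n)ˣ := hζn.autToPow ℚ σ with hu
    have hσe : ∀ v : (ZMod n)ˣ, σ (e v) = e (u * v) := by
      intro v
      have : σ (e v) = (σ ζ) ^ ((v : ZMod n)).val := by simp [e, map_pow]
      rw [this, ← hζn.autToPow_spec ℚ σ, ← hu, ← pow_mul, mul_comm, pow_mul]
      exact he_mul u v
    have hσa : ∀ v : (ZMod n)ˣ, σ (Polynomial.aeval (e v) F)
        = Polynomial.aeval (e (u * v)) F := by
      intro v
      rw [← hσe v]
      show (σ : K →+* K) (Polynomial.aeval (e v) F) = _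
      rw [Polynomial.aeval_def, Polynomial.hom_eval₂,
        Subsingleton.elim ((σ : K →+* K).comp (algebraMap ℤ K)) (algebraMap ℤ K),
        ← Polynomial.aeval_def]
      rfl
    calc σ (B s) = ∏ v ∈ Finset.univ.filter (fun v => c v = s),
          Polynomial.aeval (e (u * v)) F := by
          rw [map_prod]; exact Finset.prod_congr rfl (fun v _ => hσa v)
      _ = B (c u * s) := by
          refine Finset.prod_nbij' (fun v => u * v) (fun w => u⁻¹ * w) ?_ ?_ ?_ ?_ ?_
          · intro v hv
            simp only [Finset.mem_filter, Finset.mem_univ, true_and] at hv ⊢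
            rw [hcmul, hv]
          · intro w hw
            simp only [Finset.mem_filter, Finset.mem_univ, true_and] at hw ⊢
            rw [hcmul, hcinv, hw, ← mul_assoc, hcsq, one_mul]
          · intro v _; simp only [inv_mul_cancel_left]
          · intro w _; simp only [mul_inv_cancel_left]
          · intro v _; rfl
  -- the complex primitive root and the embedding φ
  let ζc : ℂ := Complex.exp (2 * ↑Real.pi * Complex.I / (n : ℂ))
  have hζc : IsPrimitiveRoot ζc n := Complex.isPrimitiveRoot_exp n hnpos.ne'
  let pb := hζ.powerBasis ℚ
  have hmp : minpoly ℚ pb.gen = Polynomial.cyclotomic N ℚ := by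
    rw [IsPrimitiveRoot.powerBasis_gen]
    exact (hζ.minpoly_eq_cyclotomic_of_irreducible
      (Polynomial.cyclotomic.irreducible_rat N.pos)).symm
  have hroot : Polynomial.aeval ζc (minpoly ℚ pb.gen) = 0 := by
    rw [hmp, Polynomial.aeval_def, ← Polynomial.eval_map, Polynomial.map_cyclotomic]
    exact (Polynomial.isRoot_cyclotomic_iff (R := ℂ) (n := N)).mpr hζc
  let φ : K →ₐ[ℚ] ℂ := pb.lift ζc hroot
  have hφζ : φ ζ = ζc := by
    have := pb.lift_gen ζc hroot
    rwa [show pb.gen = ζ from hζ.powerBasis_gen ℚ] at this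
  have hφinj : Function.Injective φ := (φ : K →+* ℂ).injective
  have hφa : ∀ x : K, φ (Polynomial.aeval x F) = Polynomial.aeval (φ x) F := by
    intro x
    show (φ : K →+* ℂ) (Polynomial.aeval x F) = _
    rw [Polynomial.aeval_def, Polynomial.hom_eval₂,
      Subsingleton.elim ((φ : K →+* ℂ).comp (algebraMap ℤ K)) (algebraMap ℤ ℂ),
      ← Polynomial.aeval_def]
    rfl
  -- Nnorm equals the image of the full product
  have hNn : Nnorm n F = φ (∏ v : (ZMod n)ˣ, Polynomial.aeval (e v) F) := by
    rw [map_prod]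
    rw [Nnorm]
    have hexp : ∀ j ∈ (Finset.range n).filter (fun j => Nat.gcd j n = 1),
        Polynomial.aeval (Complex.exp (2 * ↑Real.pi * Complex.I * (j : ℂ) / (n : ℂ))) F
          = Polynomial.aeval (ζc ^ j) F := by
      intro j _
      congr 1
      rw [show (2 * ↑Real.pi * Complex.I * (j : ℂ) / (n : ℂ)) =
        (j : ℕ) * (2 * ↑Real.pi * Complex.I / (n : ℂ)) by push_cast; ring]
      rw [← Complex.exp_nat_mul]
    rw [Finset.prod_congr rfl hexp]
    refine Finset.prod_bij (fun j hj => ZMod.unitOfCoprime j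
      (by simpa [Nat.Coprime] using (Finset.mem_filter.mp hj).2)) ?_ ?_ ?_ ?_
    · intro j hj; exact Finset.mem_univ _
    · intro j hj j' hj' hjj
      have h1 : ((j : ℕ) : ZMod n) = ((j' : ℕ) : ZMod n) := by
        have := congrArg (fun u : (ZMod n)ˣ => (u : ZMod n)) hjj
        simpa [ZMod.coe_unitOfCoprime] using this
      have hlt := Finset.mem_range.mp (Finset.mem_filter.mp hj).1
      have hlt' := Finset.mem_range.mp (Finset.mem_filter.mp hj').1
      have := (ZMod.natCast_eq_natCast_iff' j j' n).mp h1
      rwa [Nat.mod_eq_of_lt hlt, Nat.mod_eq_of_lt hlt'] at this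
    · intro v _
      refine ⟨(v : ZMod n).val, Finset.mem_filter.mpr ⟨Finset.mem_range.mpr (ZMod.val_lt _),
        (ZMod.val_coe_unit_coprime v)⟩, ?_⟩
      ext
      simp [ZMod.natCast_val, ZMod.cast_id]
    · intro j hj
      have hlt := Finset.mem_range.mp (Finset.mem_filter.mp hj).1
      have hval : (((ZMod.unitOfCoprime j
          (by simpa [Nat.Coprime] using (Finset.mem_filter.mp hj).2) : (ZMod n)ˣ)) : ZMod n).val
            = j := by
        rw [ZMod.coe_unitOfCoprime, ZMod.val_natCast, Nat.mod_eq_of_lt hlt]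
      show Polynomial.aeval (ζc ^ j) F = φ (Polynomial.aeval (e _) F)
      rw [hφa, map_pow, hφζ]
      show Polynomial.aeval (ζc ^ j) F = Polynomial.aeval (ζc ^ (((ZMod.unitOfCoprime j
          (by simpa [Nat.Coprime] using (Finset.mem_filter.mp hj).2) : (ZMod n)ˣ)) : ZMod n).val) F
      rw [hval]
  -- partition of the full product
  have hpart : (∏ v : (ZMod n)ˣ, Polynomial.aeval (e v) F) = B 1 * B (-1) := by
    have h1 := Finset.prod_filter_mul_prod_filter_not Finset.univ
      (fun v : (ZMod n)ˣ => c v = 1) (fun v => Polynomial.aeval (e v) F)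
    have h2 : Finset.univ.filter (fun v : (ZMod n)ˣ => ¬ c v = 1)
        = Finset.univ.filter (fun v => c v = -1) := by
      apply Finset.filter_congr
      intro v _
      rcases hcdi v with h | h <;> simp [h]
    rw [← h1, h2]
  -- the key product identity  B 1 * B (-1) = p
  have hprodp : B 1 * B (-1) = ((p : ℤ) : K) := by
    apply hφinj
    rw [← hpart, ← hNn]
    rw [hF]
    simp [map_intCast]
    exact (map_natCast φ p).symm
  -- Gauss sum pieces
  obtain ⟨gp, hgpint, hgpsq, hgpe⟩ := gauss_piece' (K := K) (n := n) (r := p) (m := q)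
    ⟨hp⟩ hp2 (by rw [hn, mul_comm]) hζn
  obtain ⟨gq, hgqint, hgqsq, hgqe⟩ := gauss_piece' (K := K) (n := n) (r := q) (m := p)
    ⟨hq⟩ hq2 hn hζn
  set w : K := gp * gq with hw
  -- w^2 = -n
  have hw2 : w ^ 2 = -((n : ℤ) : K) := by
    have hχ4 : (quadraticChar (ZMod p) (-1) : ℤ) * (quadraticChar (ZMod q) (-1) : ℤ) = -1 := by
      rw [quadraticChar_neg_one (by rwa [ZMod.ringChar_zmod_n]),
        quadraticChar_neg_one (by rwa [ZMod.ringChar_zmod_n])]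
      rw [ZMod.card, ZMod.card]
      have hmul : ZMod.χ₄ (p : ZMod 4) * ZMod.χ₄ (q : ZMod 4) = ZMod.χ₄ ((n : ℕ) : ZMod 4) := by
        rw [← map_mul]
        congr 1
        rw [hn]
        push_cast
        ring
      rw [hmul]
      have h34 : ((n : ℕ) : ZMod 4) = 3 := by
        have hc : ((n % 4 : ℕ) : ZMod 4) = ((n : ℕ) : ZMod 4) := ZMod.natCast_mod n 4
        rw [← hc, hmod]
        rfl
      rw [h34]
      decide
    have : w ^ 2 = ((quadraticChar (ZMod p) (-1) : ℤ) : K) * (p : K)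
        * (((quadraticChar (ZMod q) (-1) : ℤ) : K) * (q : K)) := by
      rw [hw]; rw [mul_pow, hgpsq, hgqsq]
    rw [this]
    have : (((-1 : ℤ)) : K) * ((n : ℕ) : K) = -((n : ℤ) : K) := by push_cast; ring
    rw [← this, ← hχ4]
    rw [hn, Int.cast_mul, Nat.cast_mul]
    ring
  -- equivariance of w
  have hwequiv : ∀ σ : K ≃ₐ[ℚ] K, σ w = ((c (hζn.autToPow ℚ σ) : ℤ) : K) * w := by
    intro σ
    set u : (ZMod n)ˣ := hζn.autToPow ℚ σ with hu
    have hσζ : (σ : K →+* K) ζ = ζ ^ ((u : ZMod n)).val := (hact σ).symm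
    have h1 := hgpe u (σ : K →+* K) hσζ
    have h2 := hgqe u (σ : K →+* K) hσζ
    show (σ : K →+* K) (gp * gq) = _
    rw [map_mul, h1, h2]
    show ((quadraticChar (ZMod p) (castp (u : ZMod n)) : ℤ) : K) * gp *
      (((quadraticChar (ZMod q) (castq (u : ZMod n)) : ℤ) : K) * gq) = _
    rw [Int.cast_mul, hw]
    ring
  -- integrality
  have hBint : ∀ s : ℤ, IsIntegral ℤ (B s) := by
    intro s
    apply IsIntegral.prod
    intro v _
    exact aeval_isIntegral' ((hζn.isIntegral hnpos).pow _) F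
  haveI : FiniteDimensional ℚ K := IsCyclotomicExtension.finiteDimensional {(N : ℕ)} ℚ K
  -- the trace-like integer t
  obtain ⟨tz, htz⟩ := fixed_is_int' (B 1 + B (-1))
    (by
      intro σ
      rw [map_add, hBequiv σ 1, hBequiv σ (-1)]
      rcases hcdi (hζn.autToPow ℚ σ) with h | h <;> rw [h] <;>
        simp only [one_mul, neg_one_mul, neg_neg, mul_one] <;> rw [add_comm])
    ((hBint 1).add (hBint (-1)))
  obtain ⟨kz, hkz⟩ := fixed_is_int' ((B 1 - B (-1)) * w)
    (by
      intro σ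
      rw [map_mul, map_sub, hBequiv σ 1, hBequiv σ (-1), hwequiv σ]
      rcases hcdi (hζn.autToPow ℚ σ) with h | h <;> rw [h] <;> push_cast <;>
        simp only [one_mul, mul_one, neg_one_mul, neg_neg, mul_neg, ← neg_mul, neg_sub])
    (((hBint 1).sub (hBint (-1))).mul (hgpint.mul hgqint))
  -- the key equation over K, then over ℤ
  have hKeq : ((kz : K)) ^ 2 = (((tz : K)) ^ 2 - 4 * ((p : ℤ) : K)) * (-((n : ℤ) : K)) := by
    rw [htz, hkz]
    have h1 : ((B 1 - B (-1)) * w) ^ 2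
        = ((B 1 + B (-1)) ^ 2 - 4 * (B 1 * B (-1))) * w ^ 2 :=
          (fun x y z : K => (by ring : ((x - y) * z) ^ 2 = ((x + y) ^ 2 - 4 * (x * y)) * z ^ 2)) _ _ _
    rw [h1, hprodp, hw2]
  have hZeq : kz ^ 2 = (tz ^ 2 - 4 * (p : ℤ)) * (-(n : ℤ)) := by
    have h2 : ((kz ^ 2 : ℤ) : K) = (((tz ^ 2 - 4 * (p : ℤ)) * (-(n : ℤ)) : ℤ) : K) := by
      rw [Int.cast_pow, Int.cast_mul, Int.cast_sub, Int.cast_pow, Int.cast_mul, Int.cast_neg,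
        Int.cast_ofNat]
      exact hKeq
    exact_mod_cast h2
  -- now pure integer arithmetic
  have hE : ((p : ℤ) * q) * (4 * p - tz ^ 2) = kz ^ 2 := by
    rw [hZeq]; push_cast [hn]; ring
  exact endgame' hp hq hqodd hpq tz kz hE
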